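/- arXiv:1504.00851 — 2 statements merged into one kernel-verified Lean document; each statement's English description precedes it below -/
import Mathlib

section
/- The group G_{m,n} = ⟨ρ,σ,τ | ρ^4 = σ^{2^{n+1}} = τ^{2^{m+1}} = 1, ρ² = σ^{2^n}, [ρ,σ] = σ², [ρ,τ] = τ², [σ,τ] = 1⟩ has order 2^{m+n+3}. -/
/-!
`G_{m,n}` is the semidirect product `C_{2^{m+1}} ⋊ Q_{2^{n+2}}`: the generators `ρ, σ` satisfy
the defining relations of the generalised quaternion group `Q_{2^{n+2}} = ⟨x, a⟩` (with `ρ = x`,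
`σ = a`), and `Q_{2^{n+2}}` acts on the cyclic group `⟨τ⟩` by inversion through its quotient
`Q_{2^{n+2}}/⟨a⟩ ≅ C_2`. The relations of `G_{m,n}` hold in that semidirect product and, conversely,
the universal properties of the quaternion group and of the semidirect product give a
homomorphism back; both composites fix the generators. Hence `|G_{m,n}| = 2^{m+1} · 2^{n+2}`.
-/

/-- Relators of the presented group `G_{m,n}`, with commutator convention
`[x,y] = x⁻¹y⁻¹xy`. -/
def GmnRels (m n : ℕ) : Set (FreeGroup (Fin 3)) :=
  {FreeGroup.of 0 ^ 4,
   FreeGroup.of 1 ^ (2 ^ (n + 1)),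
   FreeGroup.of 2 ^ (2 ^ (m + 1)),
   FreeGroup.of 0 ^ 2 * (FreeGroup.of 1 ^ (2 ^ n))⁻¹,
   (FreeGroup.of 0)⁻¹ * (FreeGroup.of 1)⁻¹ * FreeGroup.of 0 * FreeGroup.of 1 *
     (FreeGroup.of 1 ^ 2)⁻¹,
   (FreeGroup.of 0)⁻¹ * (FreeGroup.of 2)⁻¹ * FreeGroup.of 0 * FreeGroup.of 2 *
     (FreeGroup.of 2 ^ 2)⁻¹,
   (FreeGroup.of 1)⁻¹ * (FreeGroup.of 2)⁻¹ * FreeGroup.of 1 * FreeGroup.of 2}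

/-- The group `G_{m,n} = ⟨ρ,σ,τ ∣ ρ⁴ = σ^{2^{n+1}} = τ^{2^{m+1}} = 1, ρ² = σ^{2^n},
[ρ,σ] = σ², [ρ,τ] = τ², [σ,τ] = 1⟩`. -/
def Gmn (m n : ℕ) := PresentedGroup (GmnRels m n)

instance (m n : ℕ) : Group (Gmn m n) := inferInstanceAs (Group (PresentedGroup _))

def Gρ (m n : ℕ) : Gmn m n := PresentedGroup.of 0
def Gσ (m n : ℕ) : Gmn m n := PresentedGroup.of 1
def Gτ (m n : ℕ) : Gmn m n := PresentedGroup.of 2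

open Multiplicative

section ZModPow

variable {G : Type*} [Group G] {k : ℕ}

def zmodPowHom (g : G) (hg : g ^ k = 1) : Multiplicative (ZMod k) →* G :=
  AddMonoidHom.toMultiplicativeLeft
    (ZMod.lift k ⟨zmultiplesHom (Additive G) (Additive.ofMul g), by simp [← ofMul_pow, hg]⟩)

theorem zmodPowHom_ofAdd_intCast (g : G) (hg : g ^ k = 1) (z : ℤ) :
    zmodPowHom g hg (ofAdd (z : ZMod k)) = g ^ z := by
  simp [zmodPowHom]

theorem zmodPowHom_ofAdd_natCast (g : G) (hg : g ^ k = 1) (j : ℕ) :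
    zmodPowHom g hg (ofAdd (j : ZMod k)) = g ^ j := by
  exact_mod_cast zmodPowHom_ofAdd_intCast g hg j

@[simp]
theorem zmodPowHom_ofAdd_one (g : G) (hg : g ^ k = 1) : zmodPowHom g hg (ofAdd 1) = g := by
  simpa using zmodPowHom_ofAdd_natCast g hg 1

theorem zmodPowHom_mul_eq_mul_inv {r g : G} (hg : g ^ k = 1) (hrg : r⁻¹ * g * r = g⁻¹)
    (x : Multiplicative (ZMod k)) : zmodPowHom g hg x * r = r * (zmodPowHom g hg x)⁻¹ := by
  obtain ⟨z, hz⟩ := ZMod.intCast_surjective (toAdd x)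
  have hsemiconj : SemiconjBy r g⁻¹ g := by
    rw [SemiconjBy, ← hrg]; group
  rw [← ofAdd_toAdd x, ← hz, zmodPowHom_ofAdd_intCast, ← inv_zpow]
  exact (hsemiconj.zpow_right z).symm

theorem Commute.zmodPowHom_left {g h : G} (hgh : Commute g h) (hg : g ^ k = 1)
    (x : Multiplicative (ZMod k)) : Commute (zmodPowHom g hg x) h := by
  obtain ⟨z, hz⟩ := ZMod.intCast_surjective (toAdd x)
  rw [← ofAdd_toAdd x, ← hz, zmodPowHom_ofAdd_intCast]
  exact hgh.zpow_left z

theorem MonoidHom.ext_multiplicative_zmod {H : Type*} [Group H]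
    {f f' : Multiplicative (ZMod k) →* H} (h : f (ofAdd 1) = f' (ofAdd 1)) : f = f' := by
  refine MonoidHom.ext fun x => ?_
  obtain ⟨z, hz⟩ := ZMod.intCast_surjective (toAdd x)
  rw [← ofAdd_toAdd x, ← hz, ← zsmul_one, ofAdd_zsmul, map_zpow, map_zpow, h]

end ZModPow

namespace QuaternionGroup

variable {N : ℕ}

theorem inv_a (i : ZMod (2 * N)) : (a i)⁻¹ = a (-i) := rfl

theorem inv_xa (i : ZMod (2 * N)) : (xa i)⁻¹ = xa ((N : ZMod (2 * N)) + i) := rfl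

theorem hom_ext [NeZero N] {H : Type*} [Monoid H] {f f' : QuaternionGroup N →* H}
    (ha : f (a 1) = f' (a 1)) (hxa : f (xa 0) = f' (xa 0)) : f = f' := by
  have hai (i : ZMod (2 * N)) : f (a i) = f' (a i) := by
    rw [← ZMod.natCast_zmod_val i, ← a_one_pow, map_pow, map_pow, ha]
  refine MonoidHom.ext fun
    | a i => hai i
    | xa i => by rw [← zero_add i, ← xa_mul_a, map_mul, map_mul, hxa, hai]

section lift

variable {G : Type*} [Group G]

def lift (r s : G) (hs : s ^ (2 * N) = 1) (hr : r ^ 2 = s ^ N) (hrs : r⁻¹ * s * r = s⁻¹) :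
    QuaternionGroup N →* G where
  toFun
    | a i => zmodPowHom s hs (ofAdd i)
    | xa i => r * zmodPowHom s hs (ofAdd i)
  map_one' := by rw [one_def]; simp
  map_mul' := by
    have hcomm := zmodPowHom_mul_eq_mul_inv hs hrs
    rintro (i | i) (j | j)
    · simp [ofAdd_add]
    · simp only [a_mul_xa, sub_eq_neg_add, ofAdd_add, ofAdd_neg, map_mul, map_inv]
      rw [← mul_assoc (zmodPowHom s hs _), hcomm, mul_assoc]
    · simp [ofAdd_add, mul_assoc]
    · rw [xa_mul_xa, show (N : ZMod (2 * N)) + j - i = N + (-i + j) by ring]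
      simp only [ofAdd_add, ofAdd_neg, map_mul, map_inv, zmodPowHom_ofAdd_natCast, ← hr]
      rw [mul_assoc r, ← mul_assoc _ r, hcomm]
      simp only [sq, mul_assoc]

variable (r s : G) (hs : s ^ (2 * N) = 1) (hr : r ^ 2 = s ^ N) (hrs : r⁻¹ * s * r = s⁻¹)

@[simp]
theorem lift_a (i : ZMod (2 * N)) : lift r s hs hr hrs (a i) = zmodPowHom s hs (ofAdd i) := rfl

@[simp]
theorem lift_xa (i : ZMod (2 * N)) : lift r s hs hr hrs (xa i) = r * zmodPowHom s hs (ofAdd i) :=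
  rfl

end lift

def inversionAction (A : Type*) [CommGroup A] : QuaternionGroup N →* MulAut A where
  toFun
    | a _ => 1
    | xa _ => MulEquiv.inv A
  map_one' := by rw [one_def]
  map_mul' := by
    rintro (i | i) (j | j) <;> ext <;> simp

@[simp]
theorem inversionAction_a (A : Type*) [CommGroup A] (i : ZMod (2 * N)) :
    inversionAction A (a i) = 1 := rfl

@[simp]
theorem inversionAction_xa (A : Type*) [CommGroup A] (i : ZMod (2 * N)) :
    inversionAction A (xa i) = MulEquiv.inv A := rfl

end QuaternionGroup

open QuaternionGroup SemidirectProduct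

namespace Gmn

variable {m n : ℕ}

theorem lift_eq_one_of_mem_rels {w : FreeGroup (Fin 3)} (hw : w ∈ GmnRels m n) :
    FreeGroup.lift ![Gρ m n, Gσ m n, Gτ m n] w = 1 := by
  have hmk : FreeGroup.lift ![Gρ m n, Gσ m n, Gτ m n] = PresentedGroup.mk (GmnRels m n) := by
    ext i; fin_cases i <;> rfl
  rw [hmk]
  exact PresentedGroup.one_of_mem hw

theorem hom_ext {H : Type*} [Group H] {f f' : Gmn m n →* H} (hρ : f (Gρ m n) = f' (Gρ m n))
    (hσ : f (Gσ m n) = f' (Gσ m n)) (hτ : f (Gτ m n) = f' (Gτ m n)) : f = f' :=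
  PresentedGroup.ext (rels := GmnRels m n) fun i => by fin_cases i <;> assumption

theorem Gσ_pow_two_mul_two_pow : Gσ m n ^ (2 * 2 ^ n) = 1 := by
  have h := lift_eq_one_of_mem_rels (m := m) (n := n) (w := .of 1 ^ 2 ^ (n + 1))
    (by simp [GmnRels])
  simp only [map_pow, FreeGroup.lift_apply_of] at h
  simpa [← pow_succ'] using h

theorem Gτ_pow_two_pow_succ : Gτ m n ^ 2 ^ (m + 1) = 1 := by
  have h := lift_eq_one_of_mem_rels (m := m) (n := n) (w := .of 2 ^ 2 ^ (m + 1))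
    (by simp [GmnRels])
  simp only [map_pow, FreeGroup.lift_apply_of] at h
  simpa using h

theorem Gρ_sq : Gρ m n ^ 2 = Gσ m n ^ 2 ^ n := by
  have h := lift_eq_one_of_mem_rels (m := m) (n := n) (w := .of 0 ^ 2 * (.of 1 ^ 2 ^ n)⁻¹)
    (by simp [GmnRels])
  simp only [map_mul, map_inv, map_pow, FreeGroup.lift_apply_of] at h
  simpa [mul_inv_eq_one] using h

theorem inv_Gρ_mul_Gσ_mul_Gρ : (Gρ m n)⁻¹ * Gσ m n * Gρ m n = (Gσ m n)⁻¹ := by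
  have h := lift_eq_one_of_mem_rels (m := m) (n := n)
    (w := (.of 0)⁻¹ * (.of 1)⁻¹ * .of 0 * .of 1 * (.of 1 ^ 2)⁻¹) (by simp [GmnRels])
  simp only [map_mul, map_inv, map_pow, FreeGroup.lift_apply_of] at h
  simp only [Matrix.cons_val_zero, Matrix.cons_val_one, mul_inv_eq_one, sq, mul_left_inj] at h
  calc (Gρ m n)⁻¹ * Gσ m n * Gρ m n = ((Gρ m n)⁻¹ * (Gσ m n)⁻¹ * Gρ m n)⁻¹ := by group
    _ = (Gσ m n)⁻¹ := by rw [h]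

theorem inv_Gρ_mul_Gτ_mul_Gρ : (Gρ m n)⁻¹ * Gτ m n * Gρ m n = (Gτ m n)⁻¹ := by
  have h := lift_eq_one_of_mem_rels (m := m) (n := n)
    (w := (.of 0)⁻¹ * (.of 2)⁻¹ * .of 0 * .of 2 * (.of 2 ^ 2)⁻¹) (by simp [GmnRels])
  simp only [map_mul, map_inv, map_pow, FreeGroup.lift_apply_of] at h
  simp only [Matrix.cons_val_zero, Matrix.cons_val_two, Matrix.tail_cons, Matrix.head_cons,
    mul_inv_eq_one, sq, mul_left_inj] at h
  calc (Gρ m n)⁻¹ * Gτ m n * Gρ m n = ((Gρ m n)⁻¹ * (Gτ m n)⁻¹ * Gρ m n)⁻¹ := by group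
    _ = (Gτ m n)⁻¹ := by rw [h]

theorem commute_Gσ_Gτ : Commute (Gσ m n) (Gτ m n) := by
  have h := lift_eq_one_of_mem_rels (m := m) (n := n)
    (w := (.of 1)⁻¹ * (.of 2)⁻¹ * .of 1 * .of 2) (by simp [GmnRels])
  simp only [map_mul, map_inv, FreeGroup.lift_apply_of] at h
  simp only [Matrix.cons_val_zero, Matrix.cons_val_one, Matrix.cons_val_two, Matrix.tail_cons,
    Matrix.head_cons] at h
  calc Gσ m n * Gτ m n = Gτ m n * Gσ m n * ((Gσ m n)⁻¹ * (Gτ m n)⁻¹ * Gσ m n * Gτ m n) := by group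
    _ = Gτ m n * Gσ m n := by rw [h, mul_one]

-- `QuaternionGroup N` has order `4N`, so this is `C_{2^{m+1}} ⋊ Q_{2^{n+2}}`.
abbrev SemidirectModel (m n : ℕ) : Type :=
  Multiplicative (ZMod (2 ^ (m + 1))) ⋊[QuaternionGroup.inversionAction _] QuaternionGroup (2 ^ n)

def toSemidirectModel : Gmn m n →* SemidirectModel m n :=
  PresentedGroup.toGroup (f := ![inr (xa 0), inr (a 1), inl (ofAdd 1)]) <| by
    intro w hw
    simp only [GmnRels, Set.mem_insert_iff, Set.mem_singleton_iff] at hw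
    rcases hw with rfl | rfl | rfl | rfl | rfl | rfl | rfl <;>
      simp only [map_mul, map_inv, map_pow, FreeGroup.lift_apply_of, Matrix.cons_val_zero,
        Matrix.cons_val_one, Matrix.cons_val_two, Matrix.tail_cons, Matrix.head_cons]
    · simp [← map_pow]
    · rw [← map_pow, a_one_pow, show 2 ^ (n + 1) = 2 * 2 ^ n from Nat.pow_succ',
        ZMod.natCast_self, a_zero, map_one]
    · rw [← map_pow, ← ofAdd_nsmul, nsmul_one, ZMod.natCast_self, ofAdd_zero, map_one]
    · simp [← map_pow]
    · simp only [← map_inv, ← map_pow, ← map_mul, inv_a, inv_xa, a_one_pow, a_mul_a, xa_mul_a,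
        xa_mul_xa]
      rw [← map_one inr, ← a_zero]
      congr 2
      push_cast
      ring
    · rw [← map_inv inr, ← map_inv inl, ← inl_aut_inv]
      simp [← sq]
    · rw [← map_inv inr, ← map_inv inl, ← inl_aut_inv]
      simp

@[simp]
theorem toSemidirectModel_Gρ : toSemidirectModel (Gρ m n) = inr (xa 0) :=
  PresentedGroup.toGroup.of _

@[simp]
theorem toSemidirectModel_Gσ : toSemidirectModel (Gσ m n) = inr (a 1) :=
  PresentedGroup.toGroup.of _

@[simp]
theorem toSemidirectModel_Gτ : toSemidirectModel (Gτ m n) = inl (ofAdd 1) :=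
  PresentedGroup.toGroup.of _

theorem Gρ_mul_Gτ_mul_inv_Gρ : Gρ m n * Gτ m n * (Gρ m n)⁻¹ = (Gτ m n)⁻¹ := by
  calc Gρ m n * Gτ m n * (Gρ m n)⁻¹ = Gρ m n * ((Gρ m n)⁻¹ * Gτ m n * Gρ m n)⁻¹ * (Gρ m n)⁻¹ := by
        rw [inv_Gρ_mul_Gτ_mul_Gρ, inv_inv]
    _ = (Gτ m n)⁻¹ := by group

def ofSemidirectModel : SemidirectModel m n →* Gmn m n :=
  SemidirectProduct.lift (zmodPowHom (Gτ m n) Gτ_pow_two_pow_succ)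
    (QuaternionGroup.lift (Gρ m n) (Gσ m n) Gσ_pow_two_mul_two_pow Gρ_sq inv_Gρ_mul_Gσ_mul_Gρ) <| by
    rintro (i | i) <;> refine MonoidHom.ext_multiplicative_zmod ?_
    · simp [(commute_Gσ_Gτ.zmodPowHom_left _ _).eq]
    · simp only [inversionAction_xa, MulEquiv.toMonoidHom_eq_coe, MonoidHom.coe_comp,
        MonoidHom.coe_coe, Function.comp_apply, MulEquiv.inv_apply, map_inv, zmodPowHom_ofAdd_one,
        lift_xa, map_mul, MulAut.coe_mul, MulAut.conj_apply, mul_assoc, mul_inv_cancel, mul_one,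
        (commute_Gσ_Gτ.zmodPowHom_left _ _).eq]
      rw [← mul_assoc, Gρ_mul_Gτ_mul_inv_Gρ]

def mulEquivSemidirectModel : Gmn m n ≃* SemidirectModel m n :=
  MonoidHom.toMulEquiv toSemidirectModel ofSemidirectModel
    (hom_ext (by simp [ofSemidirectModel]) (by simp [ofSemidirectModel])
      (by simp [ofSemidirectModel]))
    (SemidirectProduct.hom_ext (MonoidHom.ext_multiplicative_zmod (by simp [ofSemidirectModel]))
      (QuaternionGroup.hom_ext (by simp [ofSemidirectModel]) (by simp [ofSemidirectModel])))

end Gmn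

theorem stmt6_general (m n : ℕ) :
    Nat.card (Gmn m n) = 2 ^ (m + n + 3) := by
  rw [Nat.card_congr Gmn.mulEquivSemidirectModel.toEquiv, SemidirectProduct.card,
    Nat.card_eq_fintype_card, Nat.card_eq_fintype_card, Fintype.card_multiplicative, ZMod.card,
    QuaternionGroup.card]
  ring

/-- The group `G_{m,n}` has order `2^{m+n+3}`. -/
theorem stmt6 (m n : ℕ) (hm : 1 ≤ m) (hn : 1 ≤ n) :
    Nat.card (Gmn m n) = 2 ^ (m + n + 3) :=
  stmt6_general m n
end

section
/- For the group G = G_{m,n} with presentation ⟨ρ,σ,τ | ρ^4 = σ^{2^{n+1}} = τ^{2^{m+1}} = 1, ρ² = σ^{2^n}, [ρ,σ] = σ², [ρ,τ] = τ², [σ,τ] = 1⟩, the derived subgroup G' = ⟨σ², τ²⟩ is isomorphic to Z/2^n × Z/2^m. -/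
/-!
The relation `[ρ,σ] = σ²` says that conjugation by `ρ` inverts `σ`, and likewise for `τ`; with
`[σ,τ] = 1` this makes `N = ⟨σ², τ²⟩` normal and abelian, and all commutators of generators lie
in `N` while `σ² = [ρ⁻¹,σ⁻¹]` and `τ² = [ρ⁻¹,τ⁻¹]` are commutators, so `G' = N`. The relators
give `(σ²)^(2^n) = (τ²)^(2^m) = 1`. Conversely, `σ²` and `τ²` are independent of these exact
orders: `G` maps onto the generalized quaternion group `Q_{2^n}` by `ρ ↦ xa 0, σ ↦ a 1, τ ↦ 1`
and onto the dihedral group of order `2^(m+2)` by `ρ ↦ sr 0, σ ↦ 1, τ ↦ r 1`, and these maps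
detect the exponents of `σ²` and `τ²` respectively.
-/

open Subgroup
open scoped commutatorElement

section GroupLemmas

variable {G : Type*} [Group G]

theorem inv_mul_inv_mul_mul_eq_sq_iff {g s : G} :
    g⁻¹ * s⁻¹ * g * s = s ^ 2 ↔ g * s * g⁻¹ = s⁻¹ := by
  rw [pow_two, mul_left_inj, mul_assoc, inv_mul_eq_iff_eq_mul, mul_inv_eq_iff_eq_mul, eq_comm]

theorem inv_mul_inv_mul_mul_eq_one_iff {a b : G} : a⁻¹ * b⁻¹ * a * b = 1 ↔ Commute a b := by
  rw [← Commute.inv_inv_iff, ← commutatorElement_eq_one_iff_commute, commutatorElement_def,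
    inv_inv, inv_inv]

theorem commutatorElement_eq_inv_sq_of_conj_eq_inv {g s : G} (h : g * s * g⁻¹ = s⁻¹) :
    ⁅g, s⁆ = (s ^ 2)⁻¹ := by
  rw [commutatorElement_def, h, pow_two, mul_inv_rev]

theorem sq_mem_commutator_of_conj_eq_inv {g s : G} (h : g * s * g⁻¹ = s⁻¹) :
    s ^ 2 ∈ commutator G := by
  rw [← inv_inv (s ^ 2), ← commutatorElement_eq_inv_sq_of_conj_eq_inv h, commutatorElement_inv]
  exact commutator_mem_commutator (mem_top s) (mem_top g)

theorem Subgroup.normal_closure_of_closure_conj_image_eq {R S : Set G} (hR : closure R = ⊤)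
    (h : ∀ g ∈ R, closure (MulAut.conj g '' S) = closure S) : (closure S).Normal := by
  rw [← normalizer_eq_top_iff, eq_top_iff, ← hR, closure_le]
  intro g hg
  rw [SetLike.mem_coe, mem_normalizer_iff_map_conj_eq, MonoidHom.map_closure]
  exact h g hg

theorem isMulCommutative_of_closure_eq_top {S : Set G} (hS : closure S = ⊤)
    (h : ∀ a ∈ S, ∀ b ∈ S, a * b = b * a) : IsMulCommutative G := by
  have := isMulCommutative_closure h
  refine ⟨⟨fun x y => ?_⟩⟩
  have hx : x ∈ closure S := hS ▸ mem_top x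
  have hy : y ∈ closure S := hS ▸ mem_top y
  exact congrArg Subtype.val (mul_comm' (⟨x, hx⟩ : closure S) ⟨y, hy⟩)

theorem commutator_le_of_commutatorElement_mem {N : Subgroup G} [N.Normal] {S : Set G}
    (hS : closure S = ⊤) (h : ∀ a ∈ S, ∀ b ∈ S, ⁅a, b⁆ ∈ N) : commutator G ≤ N := by
  rw [← Normal.quotient_commutative_iff_commutator_le]
  refine isMulCommutative_of_closure_eq_top (S := QuotientGroup.mk' N '' S) ?_ ?_
  · rw [← MonoidHom.map_closure, hS, ← MonoidHom.range_eq_map, MonoidHom.range_eq_top]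
    exact QuotientGroup.mk'_surjective N
  · rintro _ ⟨a, ha, rfl⟩ _ ⟨b, hb, rfl⟩
    rw [← commutatorElement_eq_one_iff_mul_comm, ← map_commutatorElement, QuotientGroup.mk'_apply,
      QuotientGroup.eq_one_iff]
    exact h a ha b hb

end GroupLemmas

section ZModProd

variable {G : Type*} [Group G] {x y : G} {a b : ℕ} [NeZero a] [NeZero b]

theorem pow_zmod_val_add (hx : x ^ a = 1) (i j : ZMod a) :
    x ^ (i + j).val = x ^ i.val * x ^ j.val := by
  rw [ZMod.val_add, ← pow_eq_pow_mod _ hx, pow_add]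

def zmodProdHom (hxy : Commute x y) (hx : x ^ a = 1) (hy : y ^ b = 1) :
    Multiplicative (ZMod a × ZMod b) →* G where
  toFun p := x ^ p.toAdd.1.val * y ^ p.toAdd.2.val
  map_one' := by simp
  map_mul' p q := by
    simp only [toAdd_mul, Prod.fst_add, Prod.snd_add, pow_zmod_val_add hx, pow_zmod_val_add hy]
    exact (hxy.pow_pow _ _).mul_mul_mul_comm _ _

section

variable (hxy : Commute x y) (hx : x ^ a = 1) (hy : y ^ b = 1)

theorem range_zmodProdHom : (zmodProdHom hxy hx hy).range = closure {x, y} := by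
  apply le_antisymm
  · rintro _ ⟨p, rfl⟩
    exact mul_mem (pow_mem (subset_closure (by simp)) _) (pow_mem (subset_closure (by simp)) _)
  · rw [closure_le, Set.pair_subset_iff]
    constructor
    · refine ⟨Multiplicative.ofAdd (1, 0), ?_⟩
      simp [zmodProdHom, ZMod.val_one_eq_one_mod, ← pow_eq_pow_mod _ hx]
    · refine ⟨Multiplicative.ofAdd (0, 1), ?_⟩
      simp [zmodProdHom, ZMod.val_one_eq_one_mod, ← pow_eq_pow_mod _ hy]

theorem injective_zmodProdHom (hind : ∀ p q : ℕ, x ^ p * y ^ q = 1 → a ∣ p ∧ b ∣ q) :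
    Function.Injective (zmodProdHom hxy hx hy) := by
  rw [injective_iff_map_eq_one]
  intro p hp
  obtain ⟨hp₁, hp₂⟩ := hind _ _ hp
  have h₁ := Nat.eq_zero_of_dvd_of_lt hp₁ (ZMod.val_lt _)
  have h₂ := Nat.eq_zero_of_dvd_of_lt hp₂ (ZMod.val_lt _)
  rw [ZMod.val_eq_zero] at h₁ h₂
  exact Multiplicative.toAdd.injective (Prod.ext h₁ h₂)

end

theorem nonempty_closure_pair_mulEquiv_zmodProd (hxy : Commute x y) (hx : x ^ a = 1)
    (hy : y ^ b = 1) (hind : ∀ p q : ℕ, x ^ p * y ^ q = 1 → a ∣ p ∧ b ∣ q) :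
    Nonempty (closure {x, y} ≃* Multiplicative (ZMod a × ZMod b)) :=
  ⟨((MonoidHom.ofInjective (injective_zmodProdHom hxy hx hy hind)).trans
    (MulEquiv.subgroupCongr (range_zmodProdHom hxy hx hy))).symm⟩

end ZModProd

namespace Gmn

/-- The relators of `GmnRels`, with `[ρ,σ] = σ²` and `[ρ,τ] = τ²` in the equivalent form
`ρσρ⁻¹ = σ⁻¹`, `ρτρ⁻¹ = τ⁻¹`. -/
structure Relations (m n : ℕ) {H : Type*} [Group H] (ρ σ τ : H) : Prop where
  ρ_pow : ρ ^ 4 = 1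
  σ_pow : σ ^ 2 ^ (n + 1) = 1
  τ_pow : τ ^ 2 ^ (m + 1) = 1
  ρ_sq : ρ ^ 2 = σ ^ 2 ^ n
  conj_σ : ρ * σ * ρ⁻¹ = σ⁻¹
  conj_τ : ρ * τ * ρ⁻¹ = τ⁻¹
  commute_στ : Commute σ τ

variable {m n : ℕ} {H : Type*} [Group H]

theorem forall_lift_eq_one_iff (f : Fin 3 → H) :
    (∀ r ∈ GmnRels m n, FreeGroup.lift f r = 1) ↔ Relations m n (f 0) (f 1) (f 2) := by
  simp only [GmnRels, Set.mem_insert_iff, Set.mem_singleton_iff, forall_eq_or_imp, forall_eq,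
    map_mul, map_pow, map_inv, FreeGroup.lift_apply_of, mul_inv_eq_one,
    inv_mul_inv_mul_mul_eq_sq_iff, inv_mul_inv_mul_mul_eq_one_iff]
  exact ⟨fun ⟨h₁, h₂, h₃, h₄, h₅, h₆, h₇⟩ => ⟨h₁, h₂, h₃, h₄, h₅, h₆, h₇⟩,
    fun ⟨h₁, h₂, h₃, h₄, h₅, h₆, h₇⟩ => ⟨h₁, h₂, h₃, h₄, h₅, h₆, h₇⟩⟩

theorem relations : Relations m n (Gρ m n) (Gσ m n) (Gτ m n) := by
  refine (forall_lift_eq_one_iff PresentedGroup.of).1 fun r hr => ?_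
  rw [← FreeGroup.lift_unique (f := PresentedGroup.of) (PresentedGroup.mk _) fun _ => rfl]
  exact PresentedGroup.one_of_mem hr

def lift {ρ σ τ : H} (h : Relations m n ρ σ τ) : Gmn m n →* H :=
  PresentedGroup.toGroup ((forall_lift_eq_one_iff ![ρ, σ, τ]).2 h)

theorem lift_Gσ {ρ σ τ : H} (h : Relations m n ρ σ τ) : lift h (Gσ m n) = σ :=
  PresentedGroup.toGroup.of _

theorem lift_Gτ {ρ σ τ : H} (h : Relations m n ρ σ τ) : lift h (Gτ m n) = τ :=
  PresentedGroup.toGroup.of _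

theorem closure_generators : closure {Gρ m n, Gσ m n, Gτ m n} = ⊤ := by
  refine (eq_top_iff' _).2 (PresentedGroup.generated_by _ _ fun i => subset_closure ?_)
  fin_cases i
  exacts [Set.mem_insert _ _, Set.mem_insert_of_mem _ (Set.mem_insert _ _),
    Set.mem_insert_of_mem _ (Set.mem_insert_of_mem _ rfl)]

theorem normal_closure_sq : (closure {Gσ m n ^ 2, Gτ m n ^ 2}).Normal := by
  have h := relations (m := m) (n := n)
  refine normal_closure_of_closure_conj_image_eq closure_generators ?_
  rintro g (rfl | rfl | rfl) <;> rw [Set.image_pair] <;> simp only [map_pow, MulAut.conj_apply]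
  · rw [h.conj_σ, h.conj_τ, inv_pow, inv_pow, ← Set.inv_singleton, ← Set.inv_insert, closure_inv]
  · rw [h.commute_στ.eq, mul_inv_cancel_right, mul_inv_cancel_right]
  · rw [h.commute_στ.symm.eq, mul_inv_cancel_right, mul_inv_cancel_right]

theorem commutator_eq_closure_sq :
    commutator (Gmn m n) = closure {Gσ m n ^ 2, Gτ m n ^ 2} := by
  have h := relations (m := m) (n := n)
  have := normal_closure_sq (m := m) (n := n)
  apply le_antisymm
  · refine commutator_le_of_commutatorElement_mem closure_generators ?_
    have hρσ : ⁅Gρ m n, Gσ m n⁆ ∈ closure {Gσ m n ^ 2, Gτ m n ^ 2} := by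
      rw [commutatorElement_eq_inv_sq_of_conj_eq_inv h.conj_σ]
      exact inv_mem (subset_closure (Set.mem_insert _ _))
    have hρτ : ⁅Gρ m n, Gτ m n⁆ ∈ closure {Gσ m n ^ 2, Gτ m n ^ 2} := by
      rw [commutatorElement_eq_inv_sq_of_conj_eq_inv h.conj_τ]
      exact inv_mem (subset_closure (Set.mem_insert_of_mem _ rfl))
    have hστ : ⁅Gσ m n, Gτ m n⁆ = 1 := commutatorElement_eq_one_iff_commute.2 h.commute_στ
    rintro a (rfl | rfl | rfl) b (rfl | rfl | rfl) <;>
      first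
      | simp only [commutatorElement_self, one_mem, hρσ, hρτ, hστ]
      | rw [← commutatorElement_inv, inv_mem_iff]; simp only [one_mem, hρσ, hρτ, hστ]
  · rw [closure_le, Set.pair_subset_iff]
    exact ⟨sq_mem_commutator_of_conj_eq_inv h.conj_σ, sq_mem_commutator_of_conj_eq_inv h.conj_τ⟩

theorem relations_quaternion :
    Relations m n (QuaternionGroup.xa 0 : QuaternionGroup (2 ^ n)) (QuaternionGroup.a 1) 1 where
  ρ_pow := QuaternionGroup.xa_pow_four 0
  σ_pow := by rw [pow_succ', QuaternionGroup.a_one_pow_n]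
  τ_pow := one_pow _
  ρ_sq := by rw [QuaternionGroup.xa_sq, QuaternionGroup.a_one_pow]
  conj_σ := by
    rw [mul_inv_eq_iff_eq_mul, eq_inv_mul_iff_mul_eq, QuaternionGroup.xa_mul_a,
      QuaternionGroup.a_mul_xa, zero_add, sub_self]
  conj_τ := by rw [mul_one, mul_inv_cancel, inv_one]
  commute_στ := Commute.one_right _

theorem relations_dihedral :
    Relations m n (DihedralGroup.sr 0 : DihedralGroup (2 ^ (m + 1))) 1 (DihedralGroup.r 1) where
  ρ_pow := orderOf_dvd_iff_pow_eq_one.1 (by rw [DihedralGroup.orderOf_sr]; norm_num)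
  σ_pow := one_pow _
  τ_pow := DihedralGroup.r_one_pow_n
  ρ_sq := by rw [pow_two, DihedralGroup.sr_mul_self, one_pow]
  conj_σ := by rw [mul_one, mul_inv_cancel, inv_one]
  conj_τ := by simp
  commute_στ := Commute.one_left _

theorem dvd_of_sq_pow_mul_sq_pow_eq_one {p q : ℕ}
    (h : (Gσ m n ^ 2) ^ p * (Gτ m n ^ 2) ^ q = 1) : 2 ^ n ∣ p ∧ 2 ^ m ∣ q := by
  constructor
  · have h' := congrArg (lift relations_quaternion) h
    simp only [map_mul, map_pow, map_one, lift_Gσ, lift_Gτ, one_pow, mul_one, ← pow_mul] at h'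
    rw [← orderOf_dvd_iff_pow_eq_one, QuaternionGroup.orderOf_a_one] at h'
    exact Nat.dvd_of_mul_dvd_mul_left two_pos h'
  · have h' := congrArg (lift relations_dihedral) h
    simp only [map_mul, map_pow, map_one, lift_Gσ, lift_Gτ, one_pow, one_mul, ← pow_mul] at h'
    rw [← orderOf_dvd_iff_pow_eq_one, DihedralGroup.orderOf_r_one, pow_succ'] at h'
    exact Nat.dvd_of_mul_dvd_mul_left two_pos h'

end Gmn

theorem stmt14_general (m n : ℕ) :
    commutator (Gmn m n) = Subgroup.closure {Gσ m n ^ 2, Gτ m n ^ 2} ∧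
    Nonempty ((commutator (Gmn m n)) ≃*
      Multiplicative (ZMod (2 ^ n) × ZMod (2 ^ m))) := by
  have h := Gmn.relations (m := m) (n := n)
  refine ⟨Gmn.commutator_eq_closure_sq, ?_⟩
  rw [Gmn.commutator_eq_closure_sq]
  refine nonempty_closure_pair_mulEquiv_zmodProd (h.commute_στ.pow_pow 2 2) ?_ ?_
    fun _ _ => Gmn.dvd_of_sq_pow_mul_sq_pow_eq_one
  · rw [← pow_mul, ← pow_succ']
    exact h.σ_pow
  · rw [← pow_mul, ← pow_succ']
    exact h.τ_pow

/-- The derived subgroup `G' = ⟨σ², τ²⟩` of `G_{m,n}` is isomorphic to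
`Z/2^n × Z/2^m`. -/
theorem stmt14 (m n : ℕ) (hm : 1 ≤ m) (hn : 1 ≤ n) :
    commutator (Gmn m n) = Subgroup.closure {Gσ m n ^ 2, Gτ m n ^ 2} ∧
    Nonempty ((commutator (Gmn m n)) ≃*
      Multiplicative (ZMod (2 ^ n) × ZMod (2 ^ m))) :=
  stmt14_general m n
end
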